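/- arXiv:1101.3911 — 2 statements merged into one kernel-verified Lean document; each statement's English description precedes it below -/
import Mathlib

section
/- For every p > 1 and every x ∈ (0,1), the following two-sided bound holds: (1 + (1−x^p)/(p(1+p)))·(1−x^p)^(1/p) < arccos_p(x) < (π_p/2)·(1−x^p)^(1/p). -/
/-!
Put `y = (1 - xᵖ)^(1/p) ∈ (0, 1)`, so that `arccos_p x = arcsin_p y` and `yᵖ = 1 - xᵖ`; both
bounds are then bounds on `arcsin_p y = ∫₀^y f` with `f t = (1 - tᵖ)^(-1/p)`.

The lower bound integrates the pointwise estimate `1 + tᵖ/p < f t`, which follows from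
`log (1 - u) < -u` and `1 + z ≤ exp z`.

For the upper bound, `arcsin_p y = y ∫₀¹ f (s y) ds < y ∫₀¹ f s ds = y · arcsin_p 1` since `f` is
strictly increasing on `[0, 1)`, and the substitution `u = tᵖ` turns `arcsin_p 1` into
`B(1/p, 1 - 1/p) / p = π / (p sin (π/p)) = π_p / 2` by the reflection formula for `Γ`.
-/

open Real

/-- The generalized inverse sine: `arcsin_p x = ∫₀ˣ (1 - tᵖ)^(-1/p) dt`. -/
noncomputable def arcsinp (p x : ℝ) : ℝ := ∫ t in (0:ℝ)..x, (1 - t ^ p) ^ (-1 / p)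

/-- The generalized inverse cosine: `arccos_p x = arcsin_p ((1 - xᵖ)^(1/p))`. -/
noncomputable def arccosp (p x : ℝ) : ℝ := arcsinp p ((1 - x ^ p) ^ (1 / p))

/-- The generalized π: `π_p = 2π / (p sin(π/p))`. -/
noncomputable def pip (p : ℝ) : ℝ := 2 * π / (p * Real.sin (π / p))

open Set MeasureTheory intervalIntegral

lemma one_add_mul_lt_one_sub_rpow_neg {r u : ℝ} (hr : 0 < r) (hu : u < 1) (hu0 : u ≠ 0) :
    1 + r * u < (1 - u) ^ (-r) := by
  have h1u : 0 < 1 - u := sub_pos.2 hu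
  have hlog : log (1 - u) < -u := by
    linarith [log_lt_sub_one_of_pos h1u (by contrapose! hu0; linarith)]
  rw [rpow_def_of_pos h1u]
  calc 1 + r * u < log (1 - u) * -r + 1 := by nlinarith
    _ ≤ exp (log (1 - u) * -r) := add_one_le_exp _

lemma ofReal_rpow_mul_one_sub_rpow {a b x : ℝ} (hx : x ∈ Icc (0:ℝ) 1) :
    ((x ^ (a - 1) * (1 - x) ^ (b - 1) : ℝ) : ℂ) =
      (x : ℂ) ^ ((a : ℂ) - 1) * (1 - (x : ℂ)) ^ ((b : ℂ) - 1) := by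
  rw [Complex.ofReal_mul, Complex.ofReal_cpow hx.1, Complex.ofReal_cpow (sub_nonneg.2 hx.2)]
  push_cast
  rfl

lemma intervalIntegrable_rpow_mul_one_sub_rpow {a b : ℝ} (ha : 0 < a) (hb : 0 < b) :
    IntervalIntegrable (fun x : ℝ => x ^ (a - 1) * (1 - x) ^ (b - 1)) volume 0 1 := by
  have h := (Complex.betaIntegral_convergent (u := a) (v := b) (by simpa) (by simpa)).congr
    (g := fun x : ℝ => ((x ^ (a - 1) * (1 - x) ^ (b - 1) : ℝ) : ℂ))
    fun x hx => (ofReal_rpow_mul_one_sub_rpow (Ioc_subset_Icc_self (by simpa using hx))).symm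
  exact ⟨by simpa [IntegrableOn] using h.1.re, by simp⟩

lemma integral_rpow_mul_one_sub_rpow {a b : ℝ} (ha : 0 < a) (hb : 0 < b) :
    ∫ x in (0:ℝ)..1, x ^ (a - 1) * (1 - x) ^ (b - 1) = ProbabilityTheory.beta a b := by
  rw [ProbabilityTheory.beta_eq_betaIntegralReal a b ha hb, Complex.betaIntegral,
    ← integral_congr fun x hx => ofReal_rpow_mul_one_sub_rpow (by simpa using hx),
    intervalIntegral.integral_ofReal, Complex.ofReal_re]

lemma beta_one_sub (a : ℝ) :
    ProbabilityTheory.beta a (1 - a) = π / sin (π * a) := by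
  rw [ProbabilityTheory.beta, add_sub_cancel, Real.Gamma_one, div_one,
    Real.Gamma_mul_Gamma_one_sub]

lemma image_rpow_Ioo_zero_one {p : ℝ} (hp : 0 < p) :
    (fun x : ℝ => x ^ p) '' Ioo 0 1 = Ioo 0 1 := by
  ext y
  constructor
  · rintro ⟨x, hx, rfl⟩
    exact ⟨rpow_pos_of_pos hx.1 p, rpow_lt_one hx.1.le hx.2 hp⟩
  · intro hy
    exact ⟨y ^ p⁻¹, ⟨rpow_pos_of_pos hy.1 _, rpow_lt_one hy.1.le hy.2 (inv_pos.2 hp)⟩,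
      rpow_inv_rpow hy.1.le hp.ne'⟩

section ChangeOfVariables

variable {E : Type*} [NormedAddCommGroup E] [NormedSpace ℝ E] {p : ℝ}

lemma integral_comp_rpow_Ioo_zero_one (g : ℝ → E) (hp : 0 < p) :
    ∫ x in Ioo 0 1, (p * x ^ (p - 1)) • g (x ^ p) = ∫ y in Ioo 0 1, g y := by
  have h := integral_image_eq_integral_abs_deriv_smul (measurableSet_Ioo (a := (0:ℝ)) (b := 1))
    (fun x hx => (hasDerivAt_rpow_const (Or.inl hx.1.ne')).hasDerivWithinAt)
    ((rpow_left_injOn hp.ne').mono fun x hx => hx.1.le) g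
  rw [image_rpow_Ioo_zero_one hp] at h
  rw [h]
  refine setIntegral_congr_fun measurableSet_Ioo fun x hx => ?_
  rw [abs_of_pos (by have := hx.1; positivity)]

lemma integrableOn_Ioo_zero_one_comp_rpow_iff (g : ℝ → E) (hp : 0 < p) :
    IntegrableOn (fun x => (p * x ^ (p - 1)) • g (x ^ p)) (Ioo 0 1) ↔
      IntegrableOn g (Ioo 0 1) := by
  have h := integrableOn_image_iff_integrableOn_abs_deriv_smul (measurableSet_Ioo (a := (0:ℝ)) (b := 1))
    (fun x hx => (hasDerivAt_rpow_const (Or.inl hx.1.ne')).hasDerivWithinAt)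
    ((rpow_left_injOn hp.ne').mono fun x hx => hx.1.le) g
  rw [image_rpow_Ioo_zero_one hp] at h
  rw [h]
  refine integrableOn_congr_fun (fun x hx => ?_) measurableSet_Ioo
  rw [abs_of_pos (by have := hx.1; positivity)]

end ChangeOfVariables

section Integrand

variable {p : ℝ}

lemma strictMonoOn_arcsinp_integrand (hp : 0 < p) :
    StrictMonoOn (fun t : ℝ => (1 - t ^ p) ^ (-1 / p)) (Ico 0 1) := fun a ha b hb hab =>
  rpow_lt_rpow_of_neg (sub_pos.2 (rpow_lt_one hb.1 hb.2 hp))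
    (sub_lt_sub_left (rpow_lt_rpow ha.1 hab hp) 1) (div_neg_of_neg_of_pos (by norm_num) hp)

lemma continuousOn_arcsinp_integrand (hp : 0 < p) :
    ContinuousOn (fun t : ℝ => (1 - t ^ p) ^ (-1 / p)) (Ico 0 1) :=
  (continuousOn_const.sub (continuous_rpow_const hp.le).continuousOn).rpow_const
    fun _ ht => Or.inl (sub_pos.2 (rpow_lt_one ht.1 ht.2 hp)).ne'

lemma smul_beta_integrand_comp_rpow (hp : 0 < p) {x : ℝ} (hx : 0 < x) :
    (p * x ^ (p - 1)) • (p⁻¹ * ((x ^ p) ^ (p⁻¹ - 1) * (1 - x ^ p) ^ ((1 - p⁻¹) - 1))) =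
      (1 - x ^ p) ^ (-1 / p) := by
  have hpow : x ^ (p - 1) * (x ^ p) ^ (p⁻¹ - 1) = 1 := by
    rw [← rpow_mul hx.le, ← rpow_add hx, mul_sub, mul_inv_cancel₀ hp.ne']
    simp
  rw [smul_eq_mul, show (1 - p⁻¹) - 1 = -1 / p by ring]
  calc p * x ^ (p - 1) * (p⁻¹ * ((x ^ p) ^ (p⁻¹ - 1) * (1 - x ^ p) ^ (-1 / p)))
      = p * p⁻¹ * (x ^ (p - 1) * (x ^ p) ^ (p⁻¹ - 1)) * (1 - x ^ p) ^ (-1 / p) := by ring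
    _ = (1 - x ^ p) ^ (-1 / p) := by rw [hpow, mul_inv_cancel₀ hp.ne', one_mul, one_mul]

theorem intervalIntegrable_arcsinp_integrand (hp : 1 < p) :
    IntervalIntegrable (fun t : ℝ => (1 - t ^ p) ^ (-1 / p)) volume 0 1 := by
  have hp0 : 0 < p := by linarith
  have hbeta := (intervalIntegrable_rpow_mul_one_sub_rpow (inv_pos.2 hp0)
    (sub_pos.2 (inv_lt_one_of_one_lt₀ hp))).const_mul p⁻¹
  rw [intervalIntegrable_iff_integrableOn_Ioo_of_le zero_le_one,
    ← integrableOn_Ioo_zero_one_comp_rpow_iff _ hp0] at hbeta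
  rw [intervalIntegrable_iff_integrableOn_Ioo_of_le zero_le_one]
  exact hbeta.congr_fun (fun x hx => smul_beta_integrand_comp_rpow hp0 hx.1) measurableSet_Ioo

theorem arcsinp_one (hp : 1 < p) : arcsinp p 1 = pip p / 2 := by
  have hp0 : 0 < p := by linarith
  have h := integral_comp_rpow_Ioo_zero_one
    (fun u => p⁻¹ * (u ^ (p⁻¹ - 1) * (1 - u) ^ ((1 - p⁻¹) - 1))) hp0
  rw [setIntegral_congr_fun measurableSet_Ioo
    (fun x hx => smul_beta_integrand_comp_rpow hp0 hx.1), MeasureTheory.integral_const_mul] at h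
  rw [arcsinp, integral_of_le zero_le_one, integral_Ioc_eq_integral_Ioo, h,
    ← integral_Ioc_eq_integral_Ioo, ← integral_of_le zero_le_one,
    integral_rpow_mul_one_sub_rpow (inv_pos.2 hp0) (sub_pos.2 (inv_lt_one_of_one_lt₀ hp)),
    beta_one_sub, pip, ← div_eq_mul_inv]
  field_simp

theorem mul_lt_arcsinp (hp : 0 < p) {y : ℝ} (hy0 : 0 < y) (hy1 : y < 1) :
    (1 + y ^ p / (p * (1 + p))) * y < arcsinp p y := by
  have hpoint : ∀ t ∈ Ioc 0 y, 1 + p⁻¹ * t ^ p < (1 - t ^ p) ^ (-1 / p) := fun t ht => by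
    rw [neg_div, one_div]
    exact one_add_mul_lt_one_sub_rpow_neg (inv_pos.2 hp)
      (rpow_lt_one ht.1.le (ht.2.trans_lt hy1) hp) (rpow_pos_of_pos ht.1 p).ne'
  have hint : ∫ t in (0:ℝ)..y, (1 + p⁻¹ * t ^ p) = (1 + y ^ p / (p * (1 + p))) * y := by
    rw [integral_add intervalIntegrable_const
        ((intervalIntegral.intervalIntegrable_rpow' (by linarith)).const_mul _),
      intervalIntegral.integral_const_mul, integral_rpow (Or.inl (by linarith)),
      intervalIntegral.integral_const, zero_rpow (by positivity), rpow_add_one hy0.ne']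
    field_simp
    ring
  rw [arcsinp, ← hint]
  exact integral_lt_integral_of_continuousOn_of_le_of_exists_lt hy0
    (continuous_const.add (continuous_const.mul (continuous_rpow_const hp.le))).continuousOn
    ((continuousOn_arcsinp_integrand hp).mono (Icc_subset_Ico_right hy1))
    (fun t ht => (hpoint t ht).le) ⟨y, right_mem_Icc.2 hy0.le, hpoint y ⟨hy0, le_rfl⟩⟩

theorem arcsinp_lt_mul_arcsinp_one (hp : 1 < p) {y : ℝ} (hy0 : 0 < y) (hy1 : y < 1) :
    arcsinp p y < y * arcsinp p 1 := by
  have hp0 : 0 < p := by linarith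
  set f := fun t : ℝ => (1 - t ^ p) ^ (-1 / p)
  have hscale : arcsinp p y = y * ∫ s in (0:ℝ)..1, f (s * y) := by
    rw [integral_comp_mul_right f hy0.ne', zero_mul, one_mul, smul_eq_mul,
      mul_inv_cancel_left₀ hy0.ne', arcsinp]
  have hlt : ∀ s ∈ Ioo (0:ℝ) 1, f (s * y) < f s := fun s hs =>
    strictMonoOn_arcsinp_integrand hp0 ⟨by nlinarith [hs.1], by nlinarith [hs.1, hs.2]⟩
      ⟨hs.1.le, hs.2⟩ (mul_lt_of_lt_one_right hs.1 hy1)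
  rw [hscale, arcsinp]
  refine mul_lt_mul_of_pos_left ?_ hy0
  apply integral_lt_integral_of_ae_le_of_measure_setOfPred_lt_ne_zero zero_le_one
  · refine ((continuousOn_arcsinp_integrand hp0).comp (continuous_mul_const y).continuousOn
      fun s hs => ⟨?_, ?_⟩).intervalIntegrable_of_Icc zero_le_one
    · exact mul_nonneg hs.1 hy0.le
    · nlinarith [hs.2]
  · exact intervalIntegrable_arcsinp_integrand hp
  -- `f 1 = 0 ^ (-1 / p) = 0` in Lean, so the comparison `f (s * y) < f s` is only used on `Ioo 0 1`.
  · rw [← restrict_Ioo_eq_restrict_Ioc]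
    exact (ae_restrict_mem measurableSet_Ioo).mono fun s hs => (hlt s hs).le
  · rw [← restrict_Ioo_eq_restrict_Ioc]
    refine (lt_of_lt_of_le ?_ (measure_mono hlt)).ne'
    rw [Measure.restrict_apply_self, Real.volume_Ioo]
    norm_num

end Integrand

theorem arccosp_bounds (p x : ℝ) (hp : 1 < p) (hx : x ∈ Set.Ioo (0:ℝ) 1) :
    (1 + (1 - x ^ p) / (p * (1 + p))) * (1 - x ^ p) ^ (1 / p) < arccosp p x ∧
      arccosp p x < pip p / 2 * (1 - x ^ p) ^ (1 / p) := by
  obtain ⟨hx0, hx1⟩ := hx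
  have hp0 : 0 < p := by linarith
  have hxp0 : 0 < x ^ p := rpow_pos_of_pos hx0 p
  have hxp1 : x ^ p < 1 := rpow_lt_one hx0.le hx1 hp0
  set y := (1 - x ^ p) ^ (1 / p) with hy
  have hy0 : 0 < y := rpow_pos_of_pos (sub_pos.2 hxp1) _
  have hy1 : y < 1 := rpow_lt_one (sub_nonneg.2 hxp1.le) (by linarith) (by positivity)
  have hyp : y ^ p = 1 - x ^ p := by
    rw [hy, one_div, rpow_inv_rpow (sub_nonneg.2 hxp1.le) hp0.ne']
  rw [arccosp, ← hy, ← hyp]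
  refine ⟨mul_lt_arcsinp hp0 hy0 hy1, ?_⟩
  calc arcsinp p y < y * arcsinp p 1 := arcsinp_lt_mul_arcsinp_one hp hy0 hy1
    _ = pip p / 2 * y := by rw [arcsinp_one hp, mul_comm]
end

section
/- For every p > 1 and all r, s ∈ (0,1), one has arcsin_p(r·s) ≤ √(arcsin_p(r²)·arcsin_p(s²)) ≤ arcsin_p(r)·arcsin_p(s). -/
/-! Write `arcsin_p c = c ∫₀¹ f(c u) du` with `f(t) = (1 - tᵖ)^(-1/p)`. If `z² = x y` then
`(1 - zᵖ)² ≥ (1 - xᵖ)(1 - yᵖ)` (this is AM–GM for `xᵖ, yᵖ`), so `f(z)² ≤ f(x) f(y)`, and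
Cauchy–Schwarz on `[0, 1]` gives the first inequality. The second follows from `x ≤ arcsin_p x`
and `arcsin_p (x²) = x² ∫₀¹ f(x² u) du ≤ x² ∫₀¹ f(x u) du = x arcsin_p x`, as `f` increases. -/

open Real

open MeasureTheory Set Filter

theorem intervalIntegral.integral_sqrt_mul_sqrt_le {g h : ℝ → ℝ} {a b : ℝ} (hab : a ≤ b)
    (hg : IntervalIntegrable g volume a b) (hh : IntervalIntegrable h volume a b)
    (hg0 : ∀ x ∈ Ioc a b, 0 ≤ g x) (hh0 : ∀ x ∈ Ioc a b, 0 ≤ h x) :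
    ∫ x in a..b, √(g x) * √(h x) ≤ √(∫ x in a..b, g x) * √(∫ x in a..b, h x) := by
  have sq_sqrt_ae {k : ℝ → ℝ} (hk0 : ∀ x ∈ Ioc a b, 0 ≤ k x) :
      (fun x => √(k x) ^ (2 : ℝ)) =ᵐ[volume.restrict (Ioc a b)] k :=
    ae_restrict_of_forall_mem measurableSet_Ioc fun x hx => by
      simp only [rpow_two, sq_sqrt (hk0 x hx)]
  have memLp_sqrt {k : ℝ → ℝ} (hk : IntegrableOn k (Ioc a b))
      (hk0 : ∀ x ∈ Ioc a b, 0 ≤ k x) :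
      MemLp (fun x => √(k x)) (ENNReal.ofReal 2) (volume.restrict (Ioc a b)) := by
    rw [ENNReal.ofReal_ofNat, memLp_two_iff_integrable_sq
      (continuous_sqrt.comp_aestronglyMeasurable hk.aestronglyMeasurable)]
    simpa only [rpow_two] using hk.congr (sq_sqrt_ae hk0).symm
  have holder := integral_mul_le_Lp_mul_Lq_of_nonneg HolderConjugate.two_two
    (Eventually.of_forall fun x => sqrt_nonneg (g x))
    (Eventually.of_forall fun x => sqrt_nonneg (h x)) (memLp_sqrt hg.1 hg0) (memLp_sqrt hh.1 hh0)
  rwa [MeasureTheory.integral_congr_ae (sq_sqrt_ae hg0),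
    MeasureTheory.integral_congr_ae (sq_sqrt_ae hh0), ← sqrt_eq_rpow, ← sqrt_eq_rpow,
    ← intervalIntegral.integral_of_le hab, ← intervalIntegral.integral_of_le hab,
    ← intervalIntegral.integral_of_le hab] at holder

lemma mul_mem_Ico_zero_one {c u : ℝ} (hc0 : 0 ≤ c) (hc1 : c < 1) (hu : u ∈ Icc (0 : ℝ) 1) :
    c * u ∈ Ico 0 1 :=
  ⟨mul_nonneg hc0 hu.1, (mul_le_of_le_one_right hc0 hu.2).trans_lt hc1⟩

noncomputable def arcsinpIntegrand (p t : ℝ) : ℝ := (1 - t ^ p) ^ (-1 / p)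

section
variable {p : ℝ}

lemma one_sub_rpow_pos (hp : 0 < p) {t : ℝ} (ht0 : 0 ≤ t) (ht1 : t < 1) : 0 < 1 - t ^ p :=
  sub_pos.2 (rpow_lt_one ht0 ht1 hp)

lemma neg_one_div_nonpos (hp : 0 < p) : -1 / p ≤ 0 :=
  div_nonpos_of_nonpos_of_nonneg (by norm_num) hp.le

lemma arcsinpIntegrand_zero (hp : 0 < p) : arcsinpIntegrand p 0 = 1 := by
  simp [arcsinpIntegrand, zero_rpow hp.ne']

lemma monotoneOn_arcsinpIntegrand (hp : 0 < p) : MonotoneOn (arcsinpIntegrand p) (Ico 0 1) :=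
  fun _ hs _ ht hst => rpow_le_rpow_of_nonpos (one_sub_rpow_pos hp ht.1 ht.2)
    (sub_le_sub_left (rpow_le_rpow hs.1 hst hp.le) 1) (neg_one_div_nonpos hp)

lemma one_le_arcsinpIntegrand (hp : 0 < p) {t : ℝ} (ht : t ∈ Ico 0 1) :
    1 ≤ arcsinpIntegrand p t :=
  arcsinpIntegrand_zero hp ▸ monotoneOn_arcsinpIntegrand hp ⟨le_rfl, one_pos⟩ ht ht.1

lemma continuousOn_arcsinpIntegrand (hp : 0 < p) :
    ContinuousOn (arcsinpIntegrand p) (Ico 0 1) := fun t ht =>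
  ((continuousAt_const.sub (continuousAt_rpow_const t p (Or.inr hp.le))).rpow_const
    (Or.inl (one_sub_rpow_pos hp ht.1 ht.2).ne')).continuousWithinAt

lemma intervalIntegrable_arcsinpIntegrand (hp : 0 < p) {x : ℝ} (hx0 : 0 ≤ x) (hx1 : x < 1) :
    IntervalIntegrable (arcsinpIntegrand p) volume 0 x :=
  ((continuousOn_arcsinpIntegrand hp).mono (Icc_subset_Ico_right hx1)).intervalIntegrable_of_Icc
    hx0

lemma continuousOn_arcsinpIntegrand_const_mul (hp : 0 < p) {c : ℝ} (hc0 : 0 ≤ c)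
    (hc1 : c < 1) : ContinuousOn (fun u => arcsinpIntegrand p (c * u)) (Icc 0 1) :=
  (continuousOn_arcsinpIntegrand hp).comp (continuous_const_mul c).continuousOn
    fun _ => mul_mem_Ico_zero_one hc0 hc1

lemma intervalIntegrable_arcsinpIntegrand_const_mul (hp : 0 < p) {c : ℝ} (hc0 : 0 ≤ c)
    (hc1 : c < 1) : IntervalIntegrable (fun u => arcsinpIntegrand p (c * u)) volume 0 1 :=
  (continuousOn_arcsinpIntegrand_const_mul hp hc0 hc1).intervalIntegrable_of_Icc zero_le_one

lemma arcsinp_eq_mul_integral {c : ℝ} (hc : c ≠ 0) :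
    arcsinp p c = c * ∫ u in (0 : ℝ)..1, arcsinpIntegrand p (c * u) := by
  rw [intervalIntegral.integral_comp_mul_left (arcsinpIntegrand p) hc, mul_zero, mul_one,
    smul_eq_mul, mul_inv_cancel_left₀ hc]
  rfl

lemma self_le_arcsinp (hp : 0 < p) {x : ℝ} (hx0 : 0 ≤ x) (hx1 : x < 1) : x ≤ arcsinp p x := by
  show x ≤ ∫ t in (0 : ℝ)..x, arcsinpIntegrand p t
  simpa using intervalIntegral.integral_mono_on hx0 intervalIntegrable_const
    (intervalIntegrable_arcsinpIntegrand hp hx0 hx1)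
    fun t ht => one_le_arcsinpIntegrand hp ⟨ht.1, ht.2.trans_lt hx1⟩

lemma arcsinp_pos (hp : 0 < p) {x : ℝ} (hx0 : 0 < x) (hx1 : x < 1) : 0 < arcsinp p x :=
  hx0.trans_le (self_le_arcsinp hp hx0.le hx1)

lemma arcsinpIntegrand_sq_le_mul (hp : 0 < p) {x y z : ℝ} (hx : x ∈ Ico 0 1)
    (hy : y ∈ Ico 0 1) (hz : 0 ≤ z) (hxyz : z ^ 2 = x * y) :
    arcsinpIntegrand p z ^ 2 ≤ arcsinpIntegrand p x * arcsinpIntegrand p y := by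
  have hz1 : z < 1 := by nlinarith [hx.1, hx.2, hy.1, hy.2]
  have hpow : (z ^ p) ^ 2 = x ^ p * y ^ p := by
    rw [rpow_pow_comm hz, hxyz, mul_rpow hx.1 hy.1]
  have hamgm : (1 - x ^ p) * (1 - y ^ p) ≤ (1 - z ^ p) ^ 2 := by
    nlinarith [sq_nonneg (x ^ p - y ^ p), rpow_nonneg hz p, rpow_nonneg hx.1 p,
      rpow_nonneg hy.1 p]
  calc arcsinpIntegrand p z ^ 2 = ((1 - z ^ p) ^ 2) ^ (-1 / p) :=
        rpow_pow_comm (one_sub_rpow_pos hp hz hz1).le _ _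
    _ ≤ ((1 - x ^ p) * (1 - y ^ p)) ^ (-1 / p) :=
        rpow_le_rpow_of_nonpos (mul_pos (one_sub_rpow_pos hp hx.1 hx.2)
          (one_sub_rpow_pos hp hy.1 hy.2)) hamgm (neg_one_div_nonpos hp)
    _ = arcsinpIntegrand p x * arcsinpIntegrand p y :=
        mul_rpow (one_sub_rpow_pos hp hx.1 hx.2).le (one_sub_rpow_pos hp hy.1 hy.2).le

lemma integral_arcsinpIntegrand_const_mul_le_sqrt (hp : 0 < p) {x y z : ℝ} (hx : x ∈ Ico 0 1)
    (hy : y ∈ Ico 0 1) (hz : 0 ≤ z) (hxyz : z ^ 2 = x * y) :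
    ∫ u in (0 : ℝ)..1, arcsinpIntegrand p (z * u) ≤
      √(∫ u in (0 : ℝ)..1, arcsinpIntegrand p (x * u)) *
        √(∫ u in (0 : ℝ)..1, arcsinpIntegrand p (y * u)) := by
  have hz1 : z < 1 := by nlinarith [hx.1, hx.2, hy.1, hy.2]
  have hpointwise : ∀ u ∈ Icc (0 : ℝ) 1, arcsinpIntegrand p (z * u) ≤
      √(arcsinpIntegrand p (x * u)) * √(arcsinpIntegrand p (y * u)) := fun u hu => by
    have hxu := mul_mem_Ico_zero_one hx.1 hx.2 hu
    rw [← sqrt_mul (zero_le_one.trans (one_le_arcsinpIntegrand hp hxu))]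
    exact le_sqrt_of_sq_le (arcsinpIntegrand_sq_le_mul hp hxu (mul_mem_Ico_zero_one hy.1 hy.2 hu)
      (mul_mem_Ico_zero_one hz hz1 hu).1 (by rw [mul_pow, hxyz]; ring))
  have hnonneg {c : ℝ} (hc : c ∈ Ico (0 : ℝ) 1) :
      ∀ u ∈ Ioc (0 : ℝ) 1, 0 ≤ arcsinpIntegrand p (c * u) := fun u hu =>
    zero_le_one.trans (one_le_arcsinpIntegrand hp
      (mul_mem_Ico_zero_one hc.1 hc.2 (Ioc_subset_Icc_self hu)))
  calc ∫ u in (0 : ℝ)..1, arcsinpIntegrand p (z * u)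
      ≤ ∫ u in (0 : ℝ)..1,
          √(arcsinpIntegrand p (x * u)) * √(arcsinpIntegrand p (y * u)) :=
        intervalIntegral.integral_mono_on zero_le_one
          (intervalIntegrable_arcsinpIntegrand_const_mul hp hz hz1)
          (((continuousOn_arcsinpIntegrand_const_mul hp hx.1 hx.2).sqrt.mul
            (continuousOn_arcsinpIntegrand_const_mul hp hy.1 hy.2).sqrt).intervalIntegrable_of_Icc
              zero_le_one) hpointwise
    _ ≤ _ := intervalIntegral.integral_sqrt_mul_sqrt_le zero_le_one
          (intervalIntegrable_arcsinpIntegrand_const_mul hp hx.1 hx.2)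
          (intervalIntegrable_arcsinpIntegrand_const_mul hp hy.1 hy.2) (hnonneg hx) (hnonneg hy)

lemma arcsinp_mul_le_sqrt (hp : 0 < p) {r s : ℝ} (hr : r ∈ Ioo 0 1) (hs : s ∈ Ioo 0 1) :
    arcsinp p (r * s) ≤ √(arcsinp p (r ^ 2) * arcsinp p (s ^ 2)) := by
  obtain ⟨hr0, hr1⟩ := hr
  obtain ⟨hs0, hs1⟩ := hs
  have hr2 : r ^ 2 < 1 := pow_lt_one₀ hr0.le hr1 two_ne_zero
  calc arcsinp p (r * s) = r * s * ∫ u in (0 : ℝ)..1, arcsinpIntegrand p (r * s * u) :=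
        arcsinp_eq_mul_integral (by positivity)
    _ ≤ r * s * (√(∫ u in (0 : ℝ)..1, arcsinpIntegrand p (r ^ 2 * u)) *
          √(∫ u in (0 : ℝ)..1, arcsinpIntegrand p (s ^ 2 * u))) := by
        gcongr
        exact integral_arcsinpIntegrand_const_mul_le_sqrt hp ⟨sq_nonneg r, hr2⟩
          ⟨sq_nonneg s, pow_lt_one₀ hs0.le hs1 two_ne_zero⟩ (by positivity) (by ring)
    _ = √(r ^ 2 * ∫ u in (0 : ℝ)..1, arcsinpIntegrand p (r ^ 2 * u)) *
          √(s ^ 2 * ∫ u in (0 : ℝ)..1, arcsinpIntegrand p (s ^ 2 * u)) := by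
        rw [sqrt_mul (sq_nonneg r), sqrt_mul (sq_nonneg s), sqrt_sq hr0.le, sqrt_sq hs0.le]
        ring
    _ = √(arcsinp p (r ^ 2) * arcsinp p (s ^ 2)) := by
        rw [sqrt_mul (arcsinp_pos hp (by positivity) hr2).le,
          arcsinp_eq_mul_integral (by positivity), arcsinp_eq_mul_integral (by positivity)]

lemma arcsinp_sq_le_sq (hp : 0 < p) {x : ℝ} (hx : x ∈ Ioo 0 1) :
    arcsinp p (x ^ 2) ≤ arcsinp p x ^ 2 := by
  obtain ⟨hx0, hx1⟩ := hx
  have hx2 : x ^ 2 < 1 := pow_lt_one₀ hx0.le hx1 two_ne_zero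
  calc arcsinp p (x ^ 2) = x ^ 2 * ∫ u in (0 : ℝ)..1, arcsinpIntegrand p (x ^ 2 * u) :=
        arcsinp_eq_mul_integral (by positivity)
    _ ≤ x ^ 2 * ∫ u in (0 : ℝ)..1, arcsinpIntegrand p (x * u) := by
        gcongr
        exact intervalIntegral.integral_mono_on zero_le_one
          (intervalIntegrable_arcsinpIntegrand_const_mul hp (sq_nonneg x) hx2)
          (intervalIntegrable_arcsinpIntegrand_const_mul hp hx0.le hx1)
          fun u hu => monotoneOn_arcsinpIntegrand hp (mul_mem_Ico_zero_one (sq_nonneg x) hx2 hu)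
            (mul_mem_Ico_zero_one hx0.le hx1 hu)
            (mul_le_mul_of_nonneg_right (by nlinarith) hu.1)
    _ = x * arcsinp p x := by rw [arcsinp_eq_mul_integral hx0.ne']; ring
    _ ≤ arcsinp p x * arcsinp p x :=
        mul_le_mul_of_nonneg_right (self_le_arcsinp hp hx0.le hx1) (arcsinp_pos hp hx0 hx1).le
    _ = arcsinp p x ^ 2 := (sq _).symm

end

theorem arcsinp_mul_inequalities (p r s : ℝ) (hp : 1 < p)
    (hr : r ∈ Set.Ioo (0:ℝ) 1) (hs : s ∈ Set.Ioo (0:ℝ) 1) :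
    arcsinp p (r * s) ≤ Real.sqrt (arcsinp p (r ^ 2) * arcsinp p (s ^ 2)) ∧
      Real.sqrt (arcsinp p (r ^ 2) * arcsinp p (s ^ 2)) ≤ arcsinp p r * arcsinp p s := by
  have hp0 : 0 < p := zero_lt_one.trans hp
  have hs2 : s ^ 2 ∈ Ioo 0 1 := ⟨pow_pos hs.1 2, pow_lt_one₀ hs.1.le hs.2 two_ne_zero⟩
  refine ⟨arcsinp_mul_le_sqrt hp0 hr hs, ?_⟩
  calc √(arcsinp p (r ^ 2) * arcsinp p (s ^ 2)) ≤ √((arcsinp p r * arcsinp p s) ^ 2) := by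
        rw [mul_pow]
        exact sqrt_le_sqrt (mul_le_mul (arcsinp_sq_le_sq hp0 hr) (arcsinp_sq_le_sq hp0 hs)
          (arcsinp_pos hp0 hs2.1 hs2.2).le (sq_nonneg _))
    _ = arcsinp p r * arcsinp p s :=
        sqrt_sq (mul_pos (arcsinp_pos hp0 hr.1 hr.2) (arcsinp_pos hp0 hs.1 hs.2)).le
end
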